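/- Let X be a Hilbert space, L : X → X* bounded self-dual with finite n⁻(L) and trivial kernel, and suppose w ∈ X satisfies ⟨Lw,w⟩ = 0 but Lw ≠ 0. Choose ψ ∈ X with ⟨Lw,ψ⟩ ≠ 0 and set S₀ = span{ψ, w}, S₁ = {ρ ∈ X : ⟨Lw,ρ⟩ = 0 and ⟨Lψ,ρ⟩ = 0}. Then X = S₀ ⊕ S₁, n⁻(L|_{S₀}) = 1, and n⁻(L) = n⁻(L|_{S₁}) + 1. -/

import Mathlib

/-!
Write `q x = ⟪L x, x⟫` and `a = ⟪L w, ψ⟫ ≠ 0`. The vector `v = ψ + β w` with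
`β = -(q ψ + 1) / (2a)` has `q v = -1` and is `L`-orthogonal to `S₁`, so adjoining it to a
negative subspace of `S₁` gives `n⁻(L) ≥ n⁻(L|S₁) + 1`. Conversely, a negative subspace loses at
most one dimension when cut by the hyperplane `⟪L w, ·⟫ = 0`, and on that hyperplane the shear
`u ↦ u - (⟪L ψ, u⟫ / a) w` lands in `S₁` and preserves `q`, because `w` is isotropic and
`L`-orthogonal to the hyperplane. On `S₀` the same hyperplane leaves only the isotropic line `ℝ w`,
whence `n⁻(L|S₀) = 1`.
-/

open RealInnerProductSpace

variable {H : Type*} [NormedAddCommGroup H] [InnerProductSpace ℝ H]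

/-- The set of dimensions of subspaces of `W` on which the quadratic form of `L` is
negative definite. -/
def negSet (L : H →L[ℝ] H) (W : Submodule ℝ H) : Set ℕ :=
  {n : ℕ | ∃ V : Submodule ℝ H, V ≤ W ∧ (∀ u ∈ V, u ≠ 0 → ⟪L u, u⟫ < (0:ℝ)) ∧
    Module.finrank ℝ V = n}

/-- Negative Morse index of `L` restricted to `W`. -/
noncomputable def negIdxOn (L : H →L[ℝ] H) (W : Submodule ℝ H) : ℕ :=
  sSup (negSet L W)

lemma LinearMap.IsSymmetric.inner_map_comm {L : H →L[ℝ] H}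
    (hL : (L : H →ₗ[ℝ] H).IsSymmetric) (x y : H) : ⟪L x, y⟫ = ⟪L y, x⟫ :=
  (hL x y).trans (real_inner_comm _ _)

lemma LinearMap.IsSymmetric.inner_map_add_smul {L : H →L[ℝ] H}
    (hL : (L : H →ₗ[ℝ] H).IsSymmetric) (x y : H) (t : ℝ) :
    ⟪L (x + t • y), x + t • y⟫ = ⟪L x, x⟫ + 2 * t * ⟪L x, y⟫ + t ^ 2 * ⟪L y, y⟫ := by
  simp only [map_add, map_smul, inner_add_left, inner_add_right, real_inner_smul_left,
    real_inner_smul_right, hL.inner_map_comm y x]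
  ring

section NegIdx

variable (L : H →L[ℝ] H)

lemma zero_mem_negSet (W : Submodule ℝ H) : 0 ∈ negSet L W :=
  ⟨⊥, bot_le, fun _ hu hne => absurd ((Submodule.mem_bot ℝ).mp hu) hne, finrank_bot ℝ H⟩

lemma negSet_mono {W W' : Submodule ℝ H} (h : W ≤ W') : negSet L W ⊆ negSet L W' := by
  rintro n ⟨V, hV, hneg, rfl⟩
  exact ⟨V, hV.trans h, hneg, rfl⟩

lemma exists_finiteDimensional_of_mem_negSet {W : Submodule ℝ H} {n : ℕ}
    (hn : n ∈ negSet L W) :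
    ∃ V : Submodule ℝ H, FiniteDimensional ℝ V ∧ V ≤ W ∧
      (∀ u ∈ V, u ≠ 0 → ⟪L u, u⟫ < (0:ℝ)) ∧ Module.finrank ℝ V = n := by
  obtain ⟨V, hVW, hneg, rfl⟩ := hn
  -- `Module.finrank` is `0` on infinite-dimensional spaces, so `0 ∈ negSet` says nothing about `V`.
  by_cases hV : Module.finrank ℝ V = 0
  · exact ⟨⊥, inferInstance, bot_le, fun _ hu hne => absurd ((Submodule.mem_bot ℝ).mp hu) hne,
      by rw [finrank_bot, hV]⟩
  · exact ⟨V, Module.finite_of_finrank_pos (Nat.pos_of_ne_zero hV), hVW, hneg, rfl⟩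

lemma negIdxOn_mem {W : Submodule ℝ H} (hW : BddAbove (negSet L W)) :
    negIdxOn L W ∈ negSet L W :=
  Nat.sSup_mem ⟨0, zero_mem_negSet L W⟩ hW

lemma negIdxOn_le_of_forall_le {W : Submodule ℝ H} {n : ℕ} (h : ∀ k ∈ negSet L W, k ≤ n) :
    negIdxOn L W ≤ n :=
  csSup_le ⟨0, zero_mem_negSet L W⟩ h

lemma negIdxOn_eq_zero_of_nonneg {W : Submodule ℝ H} (hW : ∀ u ∈ W, 0 ≤ ⟪L u, u⟫) :
    negIdxOn L W = 0 := by
  refine Nat.le_zero.mp (negIdxOn_le_of_forall_le L ?_)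
  rintro k ⟨V, hVW, hneg, rfl⟩
  have hV : V = ⊥ := (Submodule.eq_bot_iff V).mpr fun u hu => by
    by_contra hne
    exact (hneg u hu hne).not_ge (hW u (hVW hu))
  rw [hV, finrank_bot]

lemma negIdxOn_le_of_isometryOn (T : H →ₗ[ℝ] H) {W W' : Submodule ℝ H}
    (hW' : BddAbove (negSet L W')) (hTW : ∀ u ∈ W, T u ∈ W')
    (hT : ∀ u ∈ W, ⟪L (T u), T u⟫ = ⟪L u, u⟫) :
    negIdxOn L W ≤ negIdxOn L W' := by
  refine negIdxOn_le_of_forall_le L fun k ⟨V, hVW, hneg, hk⟩ => le_csSup hW' ?_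
  let g : V →ₗ[ℝ] H := T ∘ₗ V.subtype
  have hg : Function.Injective g := by
    rw [← LinearMap.ker_eq_bot, LinearMap.ker_eq_bot']
    rintro ⟨u, hu⟩ hTu
    by_contra hne
    have hTu' : T u = 0 := hTu
    have hq : ⟪L u, u⟫ = 0 := by rw [← hT u (hVW hu), hTu', map_zero, inner_zero_left]
    exact (hneg u hu fun h => hne (Subtype.ext h)).ne hq
  refine ⟨LinearMap.range g, ?_, ?_, by rw [LinearMap.finrank_range_of_inj hg, hk]⟩
  · rintro _ ⟨⟨u, hu⟩, rfl⟩
    exact hTW u (hVW hu)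
  · rintro _ ⟨⟨u, hu⟩, rfl⟩ hne
    have hu0 : u ≠ 0 := by rintro rfl; simp [g] at hne
    simpa only [g, LinearMap.comp_apply, Submodule.subtype_apply, hT u (hVW hu)]
      using hneg u hu hu0

lemma negIdxOn_le_negIdxOn_inf_ker_add_one (f : H →ₗ[ℝ] ℝ) {W : Submodule ℝ H}
    (hW : BddAbove (negSet L (W ⊓ LinearMap.ker f))) :
    negIdxOn L W ≤ negIdxOn L (W ⊓ LinearMap.ker f) + 1 := by
  refine negIdxOn_le_of_forall_le L fun k hk => ?_
  obtain ⟨V, _, hVW, hneg, rfl⟩ := exists_finiteDimensional_of_mem_negSet L hk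
  let g : V →ₗ[ℝ] ℝ := f ∘ₗ V.subtype
  let K : Submodule ℝ H := (LinearMap.ker g).map V.subtype
  have hK : Module.finrank ℝ K ∈ negSet L (W ⊓ LinearMap.ker f) := by
    refine ⟨K, ?_, ?_, rfl⟩
    · rintro _ ⟨⟨u, hu⟩, hgu, rfl⟩
      exact ⟨hVW hu, hgu⟩
    · rintro _ ⟨⟨u, hu⟩, _, rfl⟩ hne
      exact hneg u hu hne
  have hrange : Module.finrank ℝ (LinearMap.range g) ≤ 1 := by
    simpa using Submodule.finrank_le (LinearMap.range g)
  have hKrk : Module.finrank ℝ K = Module.finrank ℝ (LinearMap.ker g) :=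
    Submodule.finrank_map_subtype_eq V (LinearMap.ker g)
  have hKle : Module.finrank ℝ K ≤ negIdxOn L (W ⊓ LinearMap.ker f) := le_csSup hW hK
  have := LinearMap.finrank_range_add_finrank_ker g
  omega

variable {L}

lemma negIdxOn_add_one_le (hL : (L : H →ₗ[ℝ] H).IsSymmetric) {S W : Submodule ℝ H}
    (hS : BddAbove (negSet L S)) (hW : BddAbove (negSet L W)) (hSW : S ≤ W)
    {v : H} (hvW : v ∈ W) (hv : ⟪L v, v⟫ < (0:ℝ)) (hvS : ∀ u ∈ S, ⟪L v, u⟫ = (0:ℝ)) :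
    negIdxOn L S + 1 ≤ negIdxOn L W := by
  obtain ⟨V, _, hVS, hneg, hk⟩ := exists_finiteDimensional_of_mem_negSet L (negIdxOn_mem L hS)
  have hdisj : V ⊓ ℝ ∙ v = ⊥ := by
    refine (Submodule.eq_bot_iff _).mpr fun x ⟨hxV, hxv⟩ => ?_
    obtain ⟨t, rfl⟩ := Submodule.mem_span_singleton.mp hxv
    have h0 := hvS _ (hVS hxV)
    rw [real_inner_smul_right, mul_eq_zero] at h0
    rcases h0 with rfl | h0
    · exact zero_smul ℝ v
    · exact absurd h0 hv.ne
  refine le_csSup hW ⟨V ⊔ ℝ ∙ v,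
    sup_le (hVS.trans hSW) ((Submodule.span_singleton_le_iff_mem _ _).mpr hvW), ?_, ?_⟩
  · intro x hx hne
    obtain ⟨u, hu, z, hz, rfl⟩ := Submodule.mem_sup.mp hx
    obtain ⟨t, rfl⟩ := Submodule.mem_span_singleton.mp hz
    have hq : ⟪L (u + t • v), u + t • v⟫ = ⟪L u, u⟫ + t ^ 2 * ⟪L v, v⟫ := by
      have huv : ⟪L u, v⟫ = 0 := (hL.inner_map_comm u v).trans (hvS u (hVS hu))
      simpa [huv] using hL.inner_map_add_smul u v t
    have hqu : ⟪L u, u⟫ ≤ 0 := by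
      rcases eq_or_ne u 0 with rfl | hu0
      · simp
      · exact (hneg u hu hu0).le
    rw [hq]
    rcases eq_or_ne t 0 with rfl | ht
    · simp only [zero_smul, add_zero] at hne ⊢
      simpa using hneg u hu hne
    · nlinarith [pow_pos (abs_pos.mpr ht) 2, sq_abs t]
  · have := Submodule.finrank_sup_add_finrank_inf_eq V (ℝ ∙ v)
    rw [hdisj, finrank_bot, finrank_span_singleton (by rintro rfl; simp at hv)] at this
    omega

end NegIdx

section Splitting

variable {L : H →L[ℝ] H} {w ψ : H} {S₁ : Submodule ℝ H}

lemma inner_map_self_eq_zero_of_mem_span_pair (hw : ⟪L w, w⟫ = (0:ℝ)) (hψ : ⟪L w, ψ⟫ ≠ (0:ℝ))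
    {u : H} (hu : u ∈ Submodule.span ℝ {ψ, w}) (hwu : ⟪L w, u⟫ = (0:ℝ)) :
    ⟪L u, u⟫ = (0:ℝ) := by
  obtain ⟨α, b, rfl⟩ := Submodule.mem_span_pair.mp hu
  simp only [inner_add_right, real_inner_smul_right, hw, mul_zero, add_zero, mul_eq_zero,
    hψ, or_false] at hwu
  simp [hwu, real_inner_smul_left, real_inner_smul_right, hw]

lemma isCompl_span_pair (hL : (L : H →ₗ[ℝ] H).IsSymmetric) (hw : ⟪L w, w⟫ = (0:ℝ))
    (hψ : ⟪L w, ψ⟫ ≠ (0:ℝ)) (hS₁ : ∀ ρ, ρ ∈ S₁ ↔ (⟪L w, ρ⟫ = (0:ℝ) ∧ ⟪L ψ, ρ⟫ = (0:ℝ))) :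
    IsCompl (Submodule.span ℝ {ψ, w}) S₁ := by
  have hψw : ⟪L ψ, w⟫ = ⟪L w, ψ⟫ := hL.inner_map_comm ψ w
  constructor
  · refine Submodule.disjoint_def.mpr fun x hx₀ hx₁ => ?_
    obtain ⟨α, b, rfl⟩ := Submodule.mem_span_pair.mp hx₀
    obtain ⟨h₁, h₂⟩ := (hS₁ _).mp hx₁
    simp only [inner_add_right, real_inner_smul_right, hw, hψw] at h₁ h₂
    have hα : α = 0 := by simpa [hψ] using h₁
    have hb : b = 0 := by simpa [hα, hψ] using h₂
    simp [hα, hb]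
  · refine codisjoint_iff.mpr (eq_top_iff.mpr fun x _ => ?_)
    set a := ⟪L w, ψ⟫
    set α := ⟪L w, x⟫ / a
    set b := (⟪L ψ, x⟫ - α * ⟪L ψ, ψ⟫) / a
    refine Submodule.mem_sup.mpr ⟨α • ψ + b • w, Submodule.mem_span_pair.mpr ⟨α, b, rfl⟩,
      x - (α • ψ + b • w), (hS₁ _).mpr ⟨?_, ?_⟩, add_sub_cancel _ _⟩
    · simp only [inner_sub_right, inner_add_right, real_inner_smul_right, hw, α]
      field_simp
      ring
    · simp only [inner_sub_right, inner_add_right, real_inner_smul_right, hψw, b]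
      field_simp
      ring

lemma exists_neg_mem_span_pair (hL : (L : H →ₗ[ℝ] H).IsSymmetric) (hw : ⟪L w, w⟫ = (0:ℝ))
    (hψ : ⟪L w, ψ⟫ ≠ (0:ℝ)) (hS₁ : ∀ ρ, ρ ∈ S₁ ↔ (⟪L w, ρ⟫ = (0:ℝ) ∧ ⟪L ψ, ρ⟫ = (0:ℝ))) :
    ∃ v ∈ Submodule.span ℝ {ψ, w}, ⟪L v, v⟫ < (0:ℝ) ∧ ∀ u ∈ S₁, ⟪L v, u⟫ = (0:ℝ) := by
  set β := -(⟪L ψ, ψ⟫ + 1) / (2 * ⟪L w, ψ⟫)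
  have hψw : ⟪L ψ, w⟫ = ⟪L w, ψ⟫ := hL.inner_map_comm ψ w
  refine ⟨ψ + β • w, Submodule.mem_span_pair.mpr ⟨1, β, by rw [one_smul]⟩, ?_, fun u hu => ?_⟩
  · have hq : ⟪L (ψ + β • w), ψ + β • w⟫ = -1 := by
      rw [hL.inner_map_add_smul, hψw, hw]
      simp only [β]
      field_simp
      ring
    rw [hq]
    norm_num
  · obtain ⟨h₁, h₂⟩ := (hS₁ u).mp hu
    simp [inner_add_left, real_inner_smul_left, h₁, h₂]

lemma exists_isometryOn_ker (hL : (L : H →ₗ[ℝ] H).IsSymmetric) (hw : ⟪L w, w⟫ = (0:ℝ))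
    (hψ : ⟪L w, ψ⟫ ≠ (0:ℝ))
    (hS₁ : ∀ ρ, ρ ∈ S₁ ↔ (⟪L w, ρ⟫ = (0:ℝ) ∧ ⟪L ψ, ρ⟫ = (0:ℝ))) :
    ∃ T : H →ₗ[ℝ] H, ∀ u, ⟪L w, u⟫ = (0:ℝ) → T u ∈ S₁ ∧ ⟪L (T u), T u⟫ = ⟪L u, u⟫ := by
  let T : H →ₗ[ℝ] H :=
    LinearMap.id + (-(⟪L w, ψ⟫)⁻¹ • innerₛₗ ℝ (L ψ)).smulRight w
  have hT (u : H) : T u = u + (-(⟪L w, ψ⟫)⁻¹ * ⟪L ψ, u⟫) • w := by simp [T]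
  have hψw : ⟪L ψ, w⟫ = ⟪L w, ψ⟫ := hL.inner_map_comm ψ w
  refine ⟨T, fun u hwu => ⟨(hS₁ _).mpr ⟨?_, ?_⟩, ?_⟩⟩
  · simp [hT, inner_add_right, real_inner_smul_right, hw, hwu]
  · rw [hT, inner_add_right, real_inner_smul_right, hψw]
    field_simp
    ring
  · rw [hT, hL.inner_map_add_smul, hL.inner_map_comm u w, hwu, hw]
    ring

end Splitting

theorem stmt_16_general (L : H →L[ℝ] H)
    (hsym : ∀ u v, ⟪L u, v⟫ = ⟪u, L v⟫)
    (hfin : BddAbove (negSet L ⊤))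
    (w ψ : H) (hw : ⟪L w, w⟫ = (0:ℝ))
    (hψ : ⟪L w, ψ⟫ ≠ (0:ℝ))
    (S₁ : Submodule ℝ H)
    (hS₁ : ∀ ρ, ρ ∈ S₁ ↔ (⟪L w, ρ⟫ = (0:ℝ) ∧ ⟪L ψ, ρ⟫ = (0:ℝ))) :
    IsCompl (Submodule.span ℝ {ψ, w}) S₁ ∧
      negIdxOn L (Submodule.span ℝ {ψ, w}) = 1 ∧
      negIdxOn L ⊤ = negIdxOn L S₁ + 1 := by
  have hL : (L : H →ₗ[ℝ] H).IsSymmetric := hsym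
  have hbdd (W : Submodule ℝ H) : BddAbove (negSet L W) := hfin.mono (negSet_mono L le_top)
  let f : H →ₗ[ℝ] ℝ := innerₛₗ ℝ (L w)
  obtain ⟨v, hvS₀, hv, hvS₁⟩ := exists_neg_mem_span_pair hL hw hψ hS₁
  obtain ⟨T, hT⟩ := exists_isometryOn_ker hL hw hψ hS₁
  have hS₀f : negIdxOn L (Submodule.span ℝ {ψ, w} ⊓ LinearMap.ker f) = 0 :=
    negIdxOn_eq_zero_of_nonneg L fun u ⟨hu, hfu⟩ =>
      (inner_map_self_eq_zero_of_mem_span_pair hw hψ hu hfu).ge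
  have hbot : negIdxOn L ⊥ = 0 := negIdxOn_eq_zero_of_nonneg L (by simp)
  refine ⟨isCompl_span_pair hL hw hψ hS₁, le_antisymm ?_ ?_, le_antisymm ?_ ?_⟩
  · simpa [hS₀f] using
      negIdxOn_le_negIdxOn_inf_ker_add_one L f (W := Submodule.span ℝ {ψ, w}) (hbdd _)
  · simpa [hbot] using negIdxOn_add_one_le hL (hbdd ⊥) (hbdd _) bot_le hvS₀ hv (by simp)
  · calc negIdxOn L ⊤ ≤ negIdxOn L (⊤ ⊓ LinearMap.ker f) + 1 :=
          negIdxOn_le_negIdxOn_inf_ker_add_one L f (hbdd _)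
      _ ≤ negIdxOn L S₁ + 1 := by
          gcongr
          exact negIdxOn_le_of_isometryOn L T (hbdd S₁) (fun u hu => (hT u hu.2).1)
            fun u hu => (hT u hu.2).2
  · exact negIdxOn_add_one_le hL (hbdd S₁) hfin le_top Submodule.mem_top hv hvS₁

/-- Case 1b splitting: if ⟪Lw,w⟫ = 0 but Lw ≠ 0, ⟪Lw,ψ⟫ ≠ 0, S₀ = span{ψ,w},
S₁ = {ρ : ⟪Lw,ρ⟫ = 0 ∧ ⟪Lψ,ρ⟫ = 0}, then X = S₀ ⊕ S₁, n⁻(L|_{S₀}) = 1 and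
n⁻(L) = n⁻(L|_{S₁}) + 1. -/
theorem stmt_16 [CompleteSpace H] (L : H →L[ℝ] H)
    (hsym : ∀ u v, ⟪L u, v⟫ = ⟪u, L v⟫)
    (hfin : BddAbove (negSet L ⊤))
    (hker : ∀ u, L u = 0 → u = 0)
    (w ψ : H) (hw : ⟪L w, w⟫ = (0:ℝ)) (hLw : L w ≠ 0)
    (hψ : ⟪L w, ψ⟫ ≠ (0:ℝ))
    (S₁ : Submodule ℝ H)
    (hS₁ : ∀ ρ, ρ ∈ S₁ ↔ (⟪L w, ρ⟫ = (0:ℝ) ∧ ⟪L ψ, ρ⟫ = (0:ℝ))) :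
    IsCompl (Submodule.span ℝ {ψ, w}) S₁ ∧
      negIdxOn L (Submodule.span ℝ {ψ, w}) = 1 ∧
      negIdxOn L ⊤ = negIdxOn L S₁ + 1 :=
  stmt_16_general L hsym hfin w ψ hw hψ S₁ hS₁
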